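/- arXiv:2011.02994 — 2 statements merged into one kernel-verified Lean document; each statement's English description precedes it below -/
import Mathlib

section
/- Let d₁, d₂, M be positive integers with d₂ ≥ 2, d₂M ≥ max(d₁, 2), and d₁ ≥ 2. With U Haar-distributed on U(d₂M), index the rows of U by pairs (j,k) ∈ {1,…,d₂}×{1,…,M} and define the random column-stochastic matrix T ∈ M_{d₂×d₁}(ℝ) by T_{ji} := Σ_{k=1}^{M} |U_{(j,k),i}|² for j ∈ {1,…,d₂}, i ∈ {1,…,d₁}. Then: (i) E[T_{ji}] = 1/d₂ for all j, i; (ii) for every j and all i₁ ≠ i₂, Cov(T_{j i₁}, T_{j i₂}) = (d₂M² − 1)/(d₂³M² − d₂) − 1/d₂², which is strictly negative; and (iii) for all j₁ ≠ j₂ and all i₁ ≠ i₂, Cov(T_{j₁ i₁}, T_{j₂ i₂}) = M²/((d₂M)² − 1) − 1/d₂², which is strictly positive. (Here Cov(X,Y) = E[XY] − E[X]E[Y], expectation with respect to Haar measure.) In particular the columns of T are not independent, so the super-decohered random channel does not have the uniform distribution on column-stochastic matrices. -/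
open Matrix MeasureTheory
open scoped Kronecker

noncomputable section

instance matrixMeasurableSpace {m n : Type*} : MeasurableSpace (Matrix m n ℂ) :=
  inferInstanceAs (MeasurableSpace (m → n → ℂ))

/-- The first `d₁` columns of a unitary of size `d₂M`, under the identification
`ℂ^{d₂M} ≅ ℂ^{d₂} ⊗ ℂ^{M}`. -/
def stinespringIsometry (d₁ d₂ M : ℕ) (h : d₁ ≤ d₂ * M)
    (U : Matrix.unitaryGroup (Fin d₂ × Fin M) ℂ) :
    Matrix (Fin d₂ × Fin M) (Fin d₁) ℂ :=
  Matrix.of fun p i =>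
    (U : Matrix (Fin d₂ × Fin M) (Fin d₂ × Fin M) ℂ) p (finProdFinEquiv.symm (Fin.castLE h i))

/-- Partial trace over the second (environment) factor. -/
def ptrEnv {d M : ℕ} (Y : Matrix (Fin d × Fin M) (Fin d × Fin M) ℂ) :
    Matrix (Fin d) (Fin d) ℂ :=
  Matrix.of fun a b => ∑ k : Fin M, Y (a, k) (b, k)

/-- The random Stinespring channel `Φ_U(X) = Tr_M(V_U X V_U†)`. -/
def stinespringChannel (d₁ d₂ M : ℕ) (h : d₁ ≤ d₂ * M)
    (U : Matrix.unitaryGroup (Fin d₂ × Fin M) ℂ)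
    (X : Matrix (Fin d₁) (Fin d₁) ℂ) : Matrix (Fin d₂) (Fin d₂) ℂ :=
  ptrEnv (stinespringIsometry d₁ d₂ M h U * X * (stinespringIsometry d₁ d₂ M h U)ᴴ)

variable {ι : Type*} [Fintype ι] [DecidableEq ι]

lemma entry_meas (p q : ι) :
    Measurable (fun U : Matrix.unitaryGroup ι ℂ => (U : Matrix ι ι ℂ) p q) := by
  have h1 : Measurable (fun A : Matrix ι ι ℂ => A p q) :=
    (measurable_pi_apply q).comp (measurable_pi_apply p)
  exact h1.comp measurable_subtype_coe

lemma nsq_meas (p q : ι) :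
    Measurable (fun U : Matrix.unitaryGroup ι ℂ => Complex.normSq ((U : Matrix ι ι ℂ) p q)) :=
  Complex.continuous_normSq.measurable.comp (entry_meas p q)

lemma row_nsq_sum (U : Matrix.unitaryGroup ι ℂ) (p : ι) :
    ∑ q, Complex.normSq ((U : Matrix ι ι ℂ) p q) = 1 := by
  have h : ((U : Matrix ι ι ℂ) * star (U : Matrix ι ι ℂ)) p p = 1 :=
    by rw [U.2.2]; simp
  rw [Matrix.mul_apply] at h
  have : ∀ q, (U : Matrix ι ι ℂ) p q * (star (U : Matrix ι ι ℂ)) q p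
      = (Complex.normSq ((U : Matrix ι ι ℂ) p q) : ℂ) := by
    intro q
    simp [Matrix.star_apply, Complex.normSq_eq_conj_mul_self]
    ring
  rw [Finset.sum_congr rfl (fun q _ => this q)] at h
  exact_mod_cast h

lemma col_nsq_sum (U : Matrix.unitaryGroup ι ℂ) (c : ι) :
    ∑ p, Complex.normSq ((U : Matrix ι ι ℂ) p c) = 1 := by
  have h : (star (U : Matrix ι ι ℂ) * (U : Matrix ι ι ℂ)) c c = 1 :=
    by rw [U.2.1]; simp
  rw [Matrix.mul_apply] at h
  have : ∀ p, (star (U : Matrix ι ι ℂ)) c p * (U : Matrix ι ι ℂ) p c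
      = (Complex.normSq ((U : Matrix ι ι ℂ) p c) : ℂ) := by
    intro p
    simp [Matrix.star_apply, Complex.normSq_eq_conj_mul_self]
  rw [Finset.sum_congr rfl (fun p _ => this p)] at h
  exact_mod_cast h

lemma nsq_le_one (U : Matrix.unitaryGroup ι ℂ) (p q : ι) :
    Complex.normSq ((U : Matrix ι ι ℂ) p q) ≤ 1 := by
  have := row_nsq_sum U p
  calc Complex.normSq ((U : Matrix ι ι ℂ) p q)
      ≤ ∑ r, Complex.normSq ((U : Matrix ι ι ℂ) p r) :=
        Finset.single_le_sum (fun r _ => Complex.normSq_nonneg _) (Finset.mem_univ q)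
    _ = 1 := this

lemma col_orth (U : Matrix.unitaryGroup ι ℂ) {c₁ c₂ : ι} (hc : c₁ ≠ c₂) :
    ∑ p, (U : Matrix ι ι ℂ) p c₁ * (starRingEnd ℂ) ((U : Matrix ι ι ℂ) p c₂) = 0 := by
  have h : (star (U : Matrix ι ι ℂ) * (U : Matrix ι ι ℂ)) c₂ c₁ = 0 := by
    rw [U.2.1]; simp [Matrix.one_apply, hc.symm]
  rw [Matrix.mul_apply] at h
  rw [← h]
  apply Finset.sum_congr rfl
  intro p _
  simp [Matrix.star_apply]
  ring

variable {ι : Type*} [Fintype ι] [DecidableEq ι]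

def blockG (p q : ι) (a b c d : ℂ) : Matrix ι ι ℂ :=
  Matrix.of fun r s =>
    if r = p then (if s = p then a else if s = q then b else 0)
    else if r = q then (if s = p then c else if s = q then d else 0)
    else if r = s then 1 else 0

lemma sum_filter_two {p q : ι} (hpq : p ≠ q) (a b : ℂ) (f : ι → ℂ) :
    ∑ t, (if t = p then a else if t = q then b else 0) * f t = a * f p + b * f q := by
  have key : ∀ t, (if t = p then a else if t = q then b else 0) * f t
      = (if t = p then a * f p else 0) + (if t = q then b * f q else 0) := by
    intro t
    by_cases h1 : t = p
    · rw [h1]; simp [hpq]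
    · by_cases h2 : t = q
      · rw [h2]; simp [show q ≠ p from fun h => hpq h.symm]
      · simp [h1, h2]
  rw [Finset.sum_congr rfl fun t _ => key t, Finset.sum_add_distrib]
  simp

lemma blockG_mul (p q : ι) (hpq : p ≠ q) (a b c d : ℂ) (U : Matrix ι ι ℂ) (r s : ι) :
    (blockG p q a b c d * U) r s =
      if r = p then a * U p s + b * U q s
      else if r = q then c * U p s + d * U q s
      else U r s := by
  rw [Matrix.mul_apply]
  by_cases hr : r = p
  · rw [if_pos hr]
    calc ∑ j, blockG p q a b c d r j * U j s
        = ∑ j, (if j = p then a else if j = q then b else 0) * U j s := by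
          refine Finset.sum_congr rfl fun j _ => ?_
          simp [blockG, hr]
      _ = a * U p s + b * U q s := sum_filter_two hpq a b _
  · rw [if_neg hr]
    by_cases hr2 : r = q
    · rw [if_pos hr2]
      calc ∑ j, blockG p q a b c d r j * U j s
          = ∑ j, (if j = p then c else if j = q then d else 0) * U j s := by
            refine Finset.sum_congr rfl fun j _ => ?_
            simp [blockG, hr2, show q ≠ p from fun h => hpq h.symm]
        _ = c * U p s + d * U q s := sum_filter_two hpq c d _
    · rw [if_neg hr2]
      calc ∑ j, blockG p q a b c d r j * U j s
          = ∑ j, (if j = r then 1 else 0) * U j s := by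
            refine Finset.sum_congr rfl fun j _ => ?_
            simp only [blockG, Matrix.of_apply, if_neg hr, if_neg hr2]
            by_cases hj : j = r
            · simp [hj, eq_comm]
            · simp [hj, show ¬ (r = j) from fun h => hj h.symm]
        _ = U r s := by simp

lemma blockG_star (p q : ι) (a b c d : ℂ) :
    star (blockG p q a b c d) =
      blockG p q ((starRingEnd ℂ) a) ((starRingEnd ℂ) c) ((starRingEnd ℂ) b)
        ((starRingEnd ℂ) d) := by
  ext r s
  simp only [Matrix.star_apply, blockG, Matrix.of_apply]
  by_cases h1 : r = p <;> by_cases h2 : s = p <;> by_cases h3 : r = q <;> by_cases h4 : s = q <;>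
    simp_all [eq_comm]

lemma blockG_mem (p q : ι) (hpq : p ≠ q) (a b c d : ℂ)
    (h1 : a * (starRingEnd ℂ) a + b * (starRingEnd ℂ) b = 1)
    (h2 : c * (starRingEnd ℂ) c + d * (starRingEnd ℂ) d = 1)
    (h3 : a * (starRingEnd ℂ) c + b * (starRingEnd ℂ) d = 0) :
    blockG p q a b c d ∈ Matrix.unitaryGroup ι ℂ := by
  have h3' : c * (starRingEnd ℂ) a + d * (starRingEnd ℂ) b = 0 := by
    have := congrArg (starRingEnd ℂ) h3
    simpa [mul_comm] using this
  have hqp : q ≠ p := fun h => hpq h.symm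
  rw [Matrix.mem_unitaryGroup_iff, blockG_star]
  ext r s
  rw [blockG_mul p q hpq]
  by_cases hr : r = p
  · rw [if_pos hr]
    by_cases hs : s = p
    · simp [blockG, Matrix.one_apply, hr, hs, hpq, hqp]
      linear_combination h1
    · by_cases hs2 : s = q
      · simp [blockG, Matrix.one_apply, hr, hs, hs2, hpq, hqp]
        linear_combination h3
      · simp [blockG, Matrix.one_apply, hr, hs, hs2, hpq, hqp,
          show p ≠ s from fun h => hs h.symm]
  · rw [if_neg hr]
    by_cases hr2 : r = q
    · rw [if_pos hr2]
      by_cases hs : s = p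
      · simp [blockG, Matrix.one_apply, hr2, hs, hpq, hqp]
        linear_combination h3'
      · by_cases hs2 : s = q
        · simp [blockG, Matrix.one_apply, hr2, hs, hs2, hpq, hqp]
          linear_combination h2
        · simp [blockG, Matrix.one_apply, hr2, hs, hs2, hpq, hqp,
            show q ≠ s from fun h => hs2 h.symm]
    · rw [if_neg hr2]
      by_cases hs : s = p
      · simp [blockG, Matrix.one_apply, hs, hr, hr2]
      · by_cases hs2 : s = q
        · simp [blockG, Matrix.one_apply, hs, hs2, hr, hr2]
        · simp [blockG, Matrix.one_apply, hs, hs2, hr, hr2]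

variable {ι : Type*} [Fintype ι] [DecidableEq ι]

section meas

lemma mul_left_meas (g : Matrix.unitaryGroup ι ℂ) :
    Measurable (fun U : Matrix.unitaryGroup ι ℂ => g * U) := by
  have h : Measurable (fun U : Matrix.unitaryGroup ι ℂ =>
      ((g : Matrix ι ι ℂ) * (U : Matrix ι ι ℂ))) := by
    apply measurable_pi_lambda
    intro r
    apply measurable_pi_lambda
    intro s
    have : (fun U : Matrix.unitaryGroup ι ℂ => ((g : Matrix ι ι ℂ) * (U : Matrix ι ι ℂ)) r s)
        = fun U : Matrix.unitaryGroup ι ℂ =>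
          ∑ t, (g : Matrix ι ι ℂ) r t * (U : Matrix ι ι ℂ) t s := by
      funext U; rw [Matrix.mul_apply]
    rw [this]
    exact Finset.measurable_sum _ fun t _ => (entry_meas t s).const_mul _
  exact h.subtype_mk

variable (μ : Measure (Matrix.unitaryGroup ι ℂ)) [IsProbabilityMeasure μ]

lemma transfer (hμ : ∀ g : Matrix.unitaryGroup ι ℂ, μ.map (fun x => g * x) = μ)
    (g : Matrix.unitaryGroup ι ℂ) (f : Matrix.unitaryGroup ι ℂ → ℝ) (hf : Measurable f) :
    ∫ U, f (g * U) ∂μ = ∫ U, f U ∂μ := by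
  conv_rhs => rw [← hμ g]
  rw [integral_map (mul_left_meas g).aemeasurable hf.aestronglyMeasurable]

lemma integrable_of_bdd {f : Matrix.unitaryGroup ι ℂ → ℝ} (hf : Measurable f) (C : ℝ)
    (hb : ∀ U, |f U| ≤ C) : Integrable f μ :=
  ⟨hf.aestronglyMeasurable, HasFiniteIntegral.of_bounded (C := C) (ae_of_all _ hb)⟩

end meas
section core

variable (c₁ c₂ : ι)

/-- Same-row fourth-moment integrand. -/
def fA (p : ι) (U : Matrix.unitaryGroup ι ℂ) : ℝ :=
  Complex.normSq ((U : Matrix ι ι ℂ) p c₁) * Complex.normSq ((U : Matrix ι ι ℂ) p c₂)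

/-- Two-row fourth-moment integrand. -/
def fB (p q : ι) (U : Matrix.unitaryGroup ι ℂ) : ℝ :=
  Complex.normSq ((U : Matrix ι ι ℂ) p c₁) * Complex.normSq ((U : Matrix ι ι ℂ) q c₂)

/-- Cross-term integrand. -/
def fC (p q : ι) (U : Matrix.unitaryGroup ι ℂ) : ℝ :=
  ((U : Matrix ι ι ℂ) p c₁ * (starRingEnd ℂ) ((U : Matrix ι ι ℂ) p c₂) *
    (starRingEnd ℂ) ((U : Matrix ι ι ℂ) q c₁) * (U : Matrix ι ι ℂ) q c₂).re

lemma fA_meas (p : ι) : Measurable (fA c₁ c₂ p) :=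
  (nsq_meas p c₁).mul (nsq_meas p c₂)

lemma fB_meas (p q : ι) : Measurable (fB c₁ c₂ p q) :=
  (nsq_meas p c₁).mul (nsq_meas q c₂)

lemma fC_meas (p q : ι) : Measurable (fC c₁ c₂ p q) := by
  have hconj : Measurable fun z : ℂ => (starRingEnd ℂ) z := Complex.continuous_conj.measurable
  apply Complex.measurable_re.comp
  exact (((entry_meas p c₁).mul (hconj.comp (entry_meas p c₂))).mul
    (hconj.comp (entry_meas q c₁))).mul (entry_meas q c₂)

lemma abs_entry_le_one (U : Matrix.unitaryGroup ι ℂ) (p q : ι) :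
    ‖(U : Matrix ι ι ℂ) p q‖ ≤ 1 := by
  have h := nsq_le_one U p q
  rw [← Complex.sq_norm] at h
  nlinarith [norm_nonneg ((U : Matrix ι ι ℂ) p q)]

lemma fA_bdd (p : ι) (U : Matrix.unitaryGroup ι ℂ) : |fA c₁ c₂ p U| ≤ 1 := by
  have h1 := nsq_le_one U p c₁
  have h2 := nsq_le_one U p c₂
  have n1 := Complex.normSq_nonneg ((U : Matrix ι ι ℂ) p c₁)
  have n2 := Complex.normSq_nonneg ((U : Matrix ι ι ℂ) p c₂)
  rw [fA, abs_of_nonneg (by positivity)]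
  nlinarith

lemma fB_bdd (p q : ι) (U : Matrix.unitaryGroup ι ℂ) : |fB c₁ c₂ p q U| ≤ 1 := by
  have h1 := nsq_le_one U p c₁
  have h2 := nsq_le_one U q c₂
  have n1 := Complex.normSq_nonneg ((U : Matrix ι ι ℂ) p c₁)
  have n2 := Complex.normSq_nonneg ((U : Matrix ι ι ℂ) q c₂)
  rw [fB, abs_of_nonneg (by positivity)]
  nlinarith

lemma fC_bdd (p q : ι) (U : Matrix.unitaryGroup ι ℂ) : |fC c₁ c₂ p q U| ≤ 1 := by
  rw [fC]
  refine le_trans (Complex.abs_re_le_norm _) ?_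
  rw [norm_mul, norm_mul, norm_mul]
  have b1 := abs_entry_le_one U p c₁
  have b2 := abs_entry_le_one U p c₂
  have b3 := abs_entry_le_one U q c₁
  have b4 := abs_entry_le_one U q c₂
  rw [Complex.norm_conj, Complex.norm_conj]
  have nn : ∀ z : ℂ, 0 ≤ ‖z‖ := fun z => norm_nonneg z
  exact mul_le_one₀ (mul_le_one₀ (mul_le_one₀ b1 (nn _) b2) (nn _) b3) (nn _) b4

/-- The transposition unitary. -/
def swapU (r t : ι) (hrt : r ≠ t) : Matrix.unitaryGroup ι ℂ :=
  ⟨blockG r t 0 1 1 0, blockG_mem r t hrt 0 1 1 0 (by simp) (by simp) (by simp)⟩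

lemma swapU_apply (r t : ι) (hrt : r ≠ t) (U : Matrix.unitaryGroup ι ℂ) (x s : ι) :
    ((swapU r t hrt * U : Matrix.unitaryGroup ι ℂ) : Matrix ι ι ℂ) x s
      = (U : Matrix ι ι ℂ) (Equiv.swap r t x) s := by
  show (blockG r t 0 1 1 0 * (U : Matrix ι ι ℂ)) x s = _
  rw [blockG_mul r t hrt]
  by_cases hx : x = r
  · simp [hx, Equiv.swap_apply_left]
  · by_cases hx2 : x = t
    · simp [hx, hx2, Equiv.swap_apply_right, Ne.symm hrt]
    · simp [hx, hx2, Equiv.swap_apply_of_ne_of_ne hx hx2]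

lemma s2c_mul : ((((Real.sqrt 2)⁻¹ : ℝ)) : ℂ) * ((((Real.sqrt 2)⁻¹ : ℝ)) : ℂ) = 1 / 2 := by
  have h : (Real.sqrt 2)⁻¹ * (Real.sqrt 2)⁻¹ = 1 / 2 := by
    rw [← mul_inv, Real.mul_self_sqrt (by norm_num)]
    norm_num
  rw [← Complex.ofReal_mul, h]
  norm_num

/-- The rotation-with-phase unitary. -/
def rotU (r t : ι) (hrt : r ≠ t) (w : ℂ) (hw : w * (starRingEnd ℂ) w = 1) :
    Matrix.unitaryGroup ι ℂ :=
  ⟨blockG r t ((((Real.sqrt 2)⁻¹ : ℝ)) : ℂ) (w * ((((Real.sqrt 2)⁻¹ : ℝ)) : ℂ))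
      (-((starRingEnd ℂ) w) * ((((Real.sqrt 2)⁻¹ : ℝ)) : ℂ)) ((((Real.sqrt 2)⁻¹ : ℝ)) : ℂ),
    by
      refine blockG_mem r t hrt _ _ _ _ ?_ ?_ ?_
      · simp only [_root_.map_mul, Complex.conj_ofReal]
        linear_combination (1 + w * (starRingEnd ℂ) w) * s2c_mul + (1 / 2 : ℂ) * hw
      · simp only [_root_.map_mul, map_neg, Complex.conj_conj, Complex.conj_ofReal]
        linear_combination (1 + w * (starRingEnd ℂ) w) * s2c_mul + (1 / 2 : ℂ) * hw
      · simp only [_root_.map_mul, map_neg, Complex.conj_conj, Complex.conj_ofReal]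
        ring⟩

lemma rotU_apply_left (r t : ι) (hrt : r ≠ t) (w : ℂ) (hw : w * (starRingEnd ℂ) w = 1)
    (U : Matrix.unitaryGroup ι ℂ) (s : ι) :
    ((rotU r t hrt w hw * U : Matrix.unitaryGroup ι ℂ) : Matrix ι ι ℂ) r s
      = ((U : Matrix ι ι ℂ) r s + w * (U : Matrix ι ι ℂ) t s) * ((((Real.sqrt 2)⁻¹ : ℝ)) : ℂ) := by
  show (blockG r t _ _ _ _ * (U : Matrix ι ι ℂ)) r s = _
  rw [blockG_mul r t hrt, if_pos rfl]
  ring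

variable (μ : Measure (Matrix.unitaryGroup ι ℂ)) [IsProbabilityMeasure μ]
variable (hμ : ∀ g : Matrix.unitaryGroup ι ℂ, μ.map (fun x => g * x) = μ)

section invariance
include hμ

lemma EA_swap (r t : ι) (hrt : r ≠ t) (p : ι) :
    ∫ U, fA c₁ c₂ (Equiv.swap r t p) U ∂μ = ∫ U, fA c₁ c₂ p U ∂μ := by
  have key : ∀ U, fA c₁ c₂ (Equiv.swap r t p) U = fA c₁ c₂ p (swapU r t hrt * U) := by
    intro U
    simp only [fA, swapU_apply]
  rw [show (fun U => fA c₁ c₂ (Equiv.swap r t p) U) = fun U => fA c₁ c₂ p (swapU r t hrt * U)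
    from funext key]
  exact transfer μ hμ _ _ (fA_meas c₁ c₂ p)

lemma EB_swap (r t : ι) (hrt : r ≠ t) (p q : ι) :
    ∫ U, fB c₁ c₂ (Equiv.swap r t p) (Equiv.swap r t q) U ∂μ = ∫ U, fB c₁ c₂ p q U ∂μ := by
  have key : ∀ U, fB c₁ c₂ (Equiv.swap r t p) (Equiv.swap r t q) U
      = fB c₁ c₂ p q (swapU r t hrt * U) := by
    intro U
    simp only [fB, swapU_apply]
  rw [show (fun U => fB c₁ c₂ (Equiv.swap r t p) (Equiv.swap r t q) U)
      = fun U => fB c₁ c₂ p q (swapU r t hrt * U) from funext key]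
  exact transfer μ hμ _ _ (fB_meas c₁ c₂ p q)

lemma EC_swap (r t : ι) (hrt : r ≠ t) (p q : ι) :
    ∫ U, fC c₁ c₂ (Equiv.swap r t p) (Equiv.swap r t q) U ∂μ = ∫ U, fC c₁ c₂ p q U ∂μ := by
  have key : ∀ U, fC c₁ c₂ (Equiv.swap r t p) (Equiv.swap r t q) U
      = fC c₁ c₂ p q (swapU r t hrt * U) := by
    intro U
    simp only [fC, swapU_apply]
  rw [show (fun U => fC c₁ c₂ (Equiv.swap r t p) (Equiv.swap r t q) U)
      = fun U => fC c₁ c₂ p q (swapU r t hrt * U) from funext key]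
  exact transfer μ hμ _ _ (fC_meas c₁ c₂ p q)

end invariance

/-- Generic pair-transitivity from transposition invariance. -/
lemma pair_const {R : ι → ι → ℝ}
    (hswap : ∀ (r t : ι), r ≠ t → ∀ p q, R (Equiv.swap r t p) (Equiv.swap r t q) = R p q)
    {p q p' q' : ι} (hpq : p ≠ q) (hp'q' : p' ≠ q') : R p q = R p' q' := by
  have hswap' : ∀ (r t : ι) (p q : ι), R (Equiv.swap r t p) (Equiv.swap r t q) = R p q := by
    intro r t p q
    by_cases h : r = t
    · subst h; simp
    · exact hswap r t h p q
  have step1 : R p' (Equiv.swap p p' q) = R p q := by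
    have h := hswap' p p' p q
    rwa [Equiv.swap_apply_left] at h
  set q₂ := Equiv.swap p p' q with hq₂def
  have hq₂ : q₂ ≠ p' := by
    intro hcon
    have hkey : (Equiv.swap p p') q = (Equiv.swap p p') p := by
      rw [Equiv.swap_apply_left, ← hq₂def]
      exact hcon
    exact hpq ((Equiv.swap p p').injective hkey).symm
  have step2 : R p' q' = R p' q₂ := by
    have h := hswap' q₂ q' p' q₂
    rw [Equiv.swap_apply_left, Equiv.swap_apply_of_ne_of_ne (Ne.symm hq₂) hp'q'] at h
    exact h
  rw [step2, step1]

lemma four_phase (x₁ x₂ y₁ y₂ : ℂ) :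
    Complex.normSq (x₁ + 1 * y₁) * Complex.normSq (x₂ + 1 * y₂) +
      Complex.normSq (x₁ + Complex.I * y₁) * Complex.normSq (x₂ + Complex.I * y₂) +
      Complex.normSq (x₁ + (-1) * y₁) * Complex.normSq (x₂ + (-1) * y₂) +
      Complex.normSq (x₁ + (-Complex.I) * y₁) * Complex.normSq (x₂ + (-Complex.I) * y₂) =
    4 * (Complex.normSq x₁ * Complex.normSq x₂) + 4 * (Complex.normSq x₁ * Complex.normSq y₂) +
      4 * (Complex.normSq y₁ * Complex.normSq x₂) + 4 * (Complex.normSq y₁ * Complex.normSq y₂) +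
      8 * (x₁ * (starRingEnd ℂ) x₂ * (starRingEnd ℂ) y₁ * y₂).re := by
  simp only [Complex.normSq_apply, Complex.add_re, Complex.add_im, Complex.mul_re,
    Complex.mul_im, Complex.neg_re, Complex.neg_im, Complex.I_re, Complex.I_im,
    Complex.one_re, Complex.one_im, Complex.conj_re, Complex.conj_im]
  ring

lemma diag_re (x₁ x₂ : ℂ) :
    (x₁ * (starRingEnd ℂ) x₂ * (starRingEnd ℂ) x₁ * x₂).re
      = Complex.normSq x₁ * Complex.normSq x₂ := by
  have h : x₁ * (starRingEnd ℂ) x₂ * (starRingEnd ℂ) x₁ * x₂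
      = ((Complex.normSq x₁ * Complex.normSq x₂ : ℝ) : ℂ) := by
    rw [show x₁ * (starRingEnd ℂ) x₂ * (starRingEnd ℂ) x₁ * x₂
      = (x₁ * (starRingEnd ℂ) x₁) * (x₂ * (starRingEnd ℂ) x₂) from by ring,
      Complex.mul_conj, Complex.mul_conj]
    push_cast
    ring
  rw [h, Complex.ofReal_re]

section moments
include hμ

lemma haar_L1 (p c : ι) :
    ∫ U, Complex.normSq ((U : Matrix ι ι ℂ) p c) ∂μ = 1 / (Fintype.card ι : ℝ) := by
  have hint : ∀ p' : ι, Integrable (fun U : Matrix.unitaryGroup ι ℂ =>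
      Complex.normSq ((U : Matrix ι ι ℂ) p' c)) μ := fun p' =>
    integrable_of_bdd μ (nsq_meas p' c) 1 (fun U => by
      rw [abs_of_nonneg (Complex.normSq_nonneg _)]; exact nsq_le_one U p' c)
  have hswap : ∀ (r t : ι), r ≠ t → ∀ p' : ι,
      ∫ U, Complex.normSq ((U : Matrix ι ι ℂ) (Equiv.swap r t p') c) ∂μ
        = ∫ U, Complex.normSq ((U : Matrix ι ι ℂ) p' c) ∂μ := by
    intro r t hrt p'
    have key : ∀ U : Matrix.unitaryGroup ι ℂ,
        Complex.normSq ((U : Matrix ι ι ℂ) (Equiv.swap r t p') c)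
          = Complex.normSq (((swapU r t hrt * U : Matrix.unitaryGroup ι ℂ) : Matrix ι ι ℂ) p' c) :=
      fun U => by rw [swapU_apply]
    rw [show (fun U : Matrix.unitaryGroup ι ℂ =>
        Complex.normSq ((U : Matrix ι ι ℂ) (Equiv.swap r t p') c))
      = fun U => Complex.normSq (((swapU r t hrt * U : Matrix.unitaryGroup ι ℂ) : Matrix ι ι ℂ) p' c)
      from funext key]
    exact transfer μ hμ _ _ (nsq_meas p' c)
  have hconst : ∀ p' : ι, ∫ U, Complex.normSq ((U : Matrix ι ι ℂ) p' c) ∂μ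
      = ∫ U, Complex.normSq ((U : Matrix ι ι ℂ) p c) ∂μ := by
    intro p'
    by_cases h : p = p'
    · rw [h]
    · have := hswap p p' h p
      rwa [Equiv.swap_apply_left] at this
  have hsum : ∑ p' : ι, ∫ U, Complex.normSq ((U : Matrix ι ι ℂ) p' c) ∂μ = 1 := by
    rw [← integral_finset_sum Finset.univ (fun p' _ => hint p')]
    rw [integral_congr_ae (ae_of_all _ (fun U => col_nsq_sum U c))]
    simp
  have hpos : (0 : ℝ) < (Fintype.card ι : ℝ) := by
    have : 0 < Fintype.card ι := Fintype.card_pos_iff.mpr ⟨p⟩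
    exact_mod_cast this
  have hcard : (Fintype.card ι : ℝ) * ∫ U, Complex.normSq ((U : Matrix ι ι ℂ) p c) ∂μ = 1 := by
    calc (Fintype.card ι : ℝ) * ∫ U, Complex.normSq ((U : Matrix ι ι ℂ) p c) ∂μ
        = ∑ _p' : ι, ∫ U, Complex.normSq ((U : Matrix ι ι ℂ) p c) ∂μ := by
          rw [Finset.sum_const, Finset.card_univ, nsmul_eq_mul]
      _ = ∑ p' : ι, ∫ U, Complex.normSq ((U : Matrix ι ι ℂ) p' c) ∂μ :=
          Finset.sum_congr rfl fun p' _ => (hconst p').symm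
      _ = 1 := hsum
  rw [eq_div_iff (ne_of_gt hpos)]
  linarith [hcard]

lemma haar_L23 (hn : 1 < Fintype.card ι) (hc : c₁ ≠ c₂) :
    (∀ p, ∫ U, fA c₁ c₂ p U ∂μ
        = 1 / ((Fintype.card ι : ℝ) * ((Fintype.card ι : ℝ) + 1))) ∧
    (∀ p q, p ≠ q → ∫ U, fB c₁ c₂ p q U ∂μ = 1 / ((Fintype.card ι : ℝ) ^ 2 - 1)) := by
  set N : ℝ := (Fintype.card ι : ℝ) with hNdef
  have hN2 : (2 : ℝ) ≤ N := by
    rw [hNdef]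
    exact_mod_cast hn
  obtain ⟨p₀, q₀, hpq₀⟩ := Fintype.exists_pair_of_one_lt_card hn
  have intA : ∀ p, Integrable (fA c₁ c₂ p) μ := fun p =>
    integrable_of_bdd μ (fA_meas c₁ c₂ p) 1 (fA_bdd c₁ c₂ p)
  have intB : ∀ p q, Integrable (fB c₁ c₂ p q) μ := fun p q =>
    integrable_of_bdd μ (fB_meas c₁ c₂ p q) 1 (fB_bdd c₁ c₂ p q)
  have intC : ∀ p q, Integrable (fC c₁ c₂ p q) μ := fun p q =>
    integrable_of_bdd μ (fC_meas c₁ c₂ p q) 1 (fC_bdd c₁ c₂ p q)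
  set A : ℝ := ∫ U, fA c₁ c₂ p₀ U ∂μ with hAdef
  set B : ℝ := ∫ U, fB c₁ c₂ p₀ q₀ U ∂μ with hBdef
  set C : ℝ := ∫ U, fC c₁ c₂ p₀ q₀ U ∂μ with hCdef
  have hAconst : ∀ p, ∫ U, fA c₁ c₂ p U ∂μ = A := by
    intro p
    by_cases h : p₀ = p
    · rw [← h]
    · have h2 := EA_swap c₁ c₂ μ hμ p₀ p h p₀
      rwa [Equiv.swap_apply_left] at h2
  have hBpair : ∀ p q, p ≠ q → ∫ U, fB c₁ c₂ p q U ∂μ = B :=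
    fun p q hpq => pair_const (R := fun p q => ∫ U, fB c₁ c₂ p q U ∂μ)
      (fun r t hrt p q => EB_swap c₁ c₂ μ hμ r t hrt p q) hpq hpq₀
  have hCpair : ∀ p q, p ≠ q → ∫ U, fC c₁ c₂ p q U ∂μ = C :=
    fun p q hpq => pair_const (R := fun p q => ∫ U, fC c₁ c₂ p q U ∂μ)
      (fun r t hrt p q => EC_swap c₁ c₂ μ hμ r t hrt p q) hpq hpq₀
  have hcard_erase : ∀ p : ι, ((Finset.univ.erase p).card : ℝ) = N - 1 := by
    intro p
    rw [Finset.card_erase_of_mem (Finset.mem_univ p), Finset.card_univ]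
    have h1 : 1 ≤ Fintype.card ι := le_of_lt hn
    push_cast [Nat.cast_sub h1]
    ring
  -- Equation 1 : N A + N (N-1) B = 1
  have hrowsum : ∀ p : ι, ∑ q : ι, ∫ U, fB c₁ c₂ p q U ∂μ
      = ∫ U, Complex.normSq ((U : Matrix ι ι ℂ) p c₁) ∂μ := by
    intro p
    rw [← integral_finset_sum Finset.univ (fun q _ => intB p q)]
    refine integral_congr_ae (ae_of_all _ fun U => ?_)
    simp only [fB]
    rw [← Finset.mul_sum, col_nsq_sum U c₂, mul_one]
  have hsplitB : ∑ q : ι, ∫ U, fB c₁ c₂ p₀ q U ∂μ = A + (N - 1) * B := by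
    rw [← Finset.add_sum_erase Finset.univ _ (Finset.mem_univ p₀)]
    have hdiag : ∫ U, fB c₁ c₂ p₀ p₀ U ∂μ = A := hAconst p₀
    have hoff : ∑ q ∈ Finset.univ.erase p₀, ∫ U, fB c₁ c₂ p₀ q U ∂μ = (N - 1) * B := by
      rw [Finset.sum_congr rfl fun q hq =>
        hBpair p₀ q (Ne.symm (Finset.ne_of_mem_erase hq))]
      rw [Finset.sum_const, nsmul_eq_mul, hcard_erase]
    rw [hdiag, hoff]
  have hE1 : N * A + N * (N - 1) * B = 1 := by
    have h := hsplitB.symm.trans ((hrowsum p₀).trans (haar_L1 μ hμ p₀ c₁))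
    rw [eq_div_iff (by linarith : N ≠ 0)] at h
    linear_combination h
  -- Equation 2 : A = B + C  (rotation invariance)
  have s2r_mul : (Real.sqrt 2)⁻¹ * (Real.sqrt 2)⁻¹ = 1 / 2 := by
    rw [← mul_inv, Real.mul_self_sqrt (by norm_num)]
    norm_num
  have s2r_mul : (Real.sqrt 2)⁻¹ * (Real.sqrt 2)⁻¹ = 1 / 2 := by
    rw [← mul_inv, Real.mul_self_sqrt (by norm_num)]
    norm_num
  set G : ℂ → Matrix.unitaryGroup ι ℂ → ℝ := fun w U =>
    Complex.normSq ((U : Matrix ι ι ℂ) p₀ c₁ + w * (U : Matrix ι ι ℂ) q₀ c₁) *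
      Complex.normSq ((U : Matrix ι ι ℂ) p₀ c₂ + w * (U : Matrix ι ι ℂ) q₀ c₂) with hGdef
  have hrot : ∀ (w : ℂ), w * (starRingEnd ℂ) w = 1 → ∫ U, G w U ∂μ = 4 * A := by
    intro w hw
    have key : ∀ U : Matrix.unitaryGroup ι ℂ,
        fA c₁ c₂ p₀ (rotU p₀ q₀ hpq₀ w hw * U) = (1 / 4) * G w U := by
      intro U
      simp only [fA, hGdef]
      rw [rotU_apply_left, rotU_apply_left, Complex.normSq_mul, Complex.normSq_mul,
        Complex.normSq_ofReal, s2r_mul]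
      ring
    have htr := transfer μ hμ (rotU p₀ q₀ hpq₀ w hw) (fA c₁ c₂ p₀) (fA_meas c₁ c₂ p₀)
    rw [show (fun U => fA c₁ c₂ p₀ (rotU p₀ q₀ hpq₀ w hw * U))
        = fun U : Matrix.unitaryGroup ι ℂ => (1 / 4) * G w U from funext key,
      integral_const_mul] at htr
    rw [← hAdef] at htr
    linarith [htr]
  have intG : ∀ w : ℂ, ‖w‖ = 1 → Integrable (G w) μ := by
    intro w hwabs
    have hmeas : Measurable (G w) := by
      have h1 : ∀ cc : ι, Measurable (fun U : Matrix.unitaryGroup ι ℂ =>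
          Complex.normSq ((U : Matrix ι ι ℂ) p₀ cc + w * (U : Matrix ι ι ℂ) q₀ cc)) := fun cc =>
        Complex.continuous_normSq.measurable.comp
          ((entry_meas p₀ cc).add ((entry_meas q₀ cc).const_mul w))
      exact (h1 c₁).mul (h1 c₂)
    refine integrable_of_bdd μ hmeas 16 (fun U => ?_)
    have hb : ∀ cc : ι,
        Complex.normSq ((U : Matrix ι ι ℂ) p₀ cc + w * (U : Matrix ι ι ℂ) q₀ cc) ≤ 4 := by
      intro cc
      have habs : ‖(U : Matrix ι ι ℂ) p₀ cc + w * (U : Matrix ι ι ℂ) q₀ cc‖ ≤ 2 := by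
        refine le_trans (norm_add_le _ _) ?_
        rw [norm_mul, hwabs, one_mul]
        have h1 := abs_entry_le_one U p₀ cc
        have h2 := abs_entry_le_one U q₀ cc
        linarith
      have hsq := Complex.sq_norm ((U : Matrix ι ι ℂ) p₀ cc + w * (U : Matrix ι ι ℂ) q₀ cc)
      nlinarith [norm_nonneg ((U : Matrix ι ι ℂ) p₀ cc + w * (U : Matrix ι ι ℂ) q₀ cc)]
    have hn1 := Complex.normSq_nonneg ((U : Matrix ι ι ℂ) p₀ c₁ + w * (U : Matrix ι ι ℂ) q₀ c₁)
    have hn2 := Complex.normSq_nonneg ((U : Matrix ι ι ℂ) p₀ c₂ + w * (U : Matrix ι ι ℂ) q₀ c₂)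
    rw [hGdef]
    simp only []
    rw [abs_of_nonneg (by positivity)]
    nlinarith [hb c₁, hb c₂]
  have hw1 : (1 : ℂ) * (starRingEnd ℂ) 1 = 1 := by simp
  have hwI : Complex.I * (starRingEnd ℂ) Complex.I = 1 := by
    simp [Complex.conj_I, Complex.I_mul_I]
  have hwm1 : (-1 : ℂ) * (starRingEnd ℂ) (-1) = 1 := by simp
  have hwmI : (-Complex.I) * (starRingEnd ℂ) (-Complex.I) = 1 := by
    simp [Complex.conj_I, Complex.I_mul_I]
  have habs1 : ‖(1 : ℂ)‖ = 1 := by simp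
  have habsI : ‖Complex.I‖ = 1 := Complex.norm_I
  have habsm1 : ‖(-1 : ℂ)‖ = 1 := by simp
  have habsmI : ‖-Complex.I‖ = 1 := by simp
  have hE2 : A = B + C := by
    have hlhs : ∫ U, (G 1 U + G Complex.I U + G (-1) U + G (-Complex.I) U) ∂μ = 16 * A := by
      have i12 : Integrable (fun U => G 1 U + G Complex.I U) μ :=
        (intG 1 habs1).add (intG Complex.I habsI)
      have i123 : Integrable (fun U => G 1 U + G Complex.I U + G (-1) U) μ :=
        i12.add (intG (-1) habsm1)
      rw [integral_add i123 (intG (-Complex.I) habsmI),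
        integral_add i12 (intG (-1) habsm1),
        integral_add (intG 1 habs1) (intG Complex.I habsI),
        hrot 1 hw1, hrot Complex.I hwI, hrot (-1) hwm1, hrot (-Complex.I) hwmI]
      ring
    have hpt : ∀ U : Matrix.unitaryGroup ι ℂ,
        G 1 U + G Complex.I U + G (-1) U + G (-Complex.I) U
        = 4 * fA c₁ c₂ p₀ U + 4 * fB c₁ c₂ p₀ q₀ U + 4 * fB c₁ c₂ q₀ p₀ U + 4 * fA c₁ c₂ q₀ U
          + 8 * fC c₁ c₂ p₀ q₀ U := by
      intro U
      simp only [hGdef, fA, fB, fC]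
      exact four_phase _ _ _ _
    have hrhs : ∫ U, (G 1 U + G Complex.I U + G (-1) U + G (-Complex.I) U) ∂μ
        = 8 * A + 8 * B + 8 * C := by
      rw [integral_congr_ae (ae_of_all _ hpt)]
      have j1 : Integrable (fun U => 4 * fA c₁ c₂ p₀ U) μ := (intA p₀).const_mul 4
      have j2 : Integrable (fun U => 4 * fA c₁ c₂ p₀ U + 4 * fB c₁ c₂ p₀ q₀ U) μ :=
        j1.add ((intB p₀ q₀).const_mul 4)
      have j3 : Integrable (fun U => 4 * fA c₁ c₂ p₀ U + 4 * fB c₁ c₂ p₀ q₀ U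
          + 4 * fB c₁ c₂ q₀ p₀ U) μ := j2.add ((intB q₀ p₀).const_mul 4)
      have j4 : Integrable (fun U => 4 * fA c₁ c₂ p₀ U + 4 * fB c₁ c₂ p₀ q₀ U
          + 4 * fB c₁ c₂ q₀ p₀ U + 4 * fA c₁ c₂ q₀ U) μ := j3.add ((intA q₀).const_mul 4)
      rw [integral_add j4 ((intC p₀ q₀).const_mul 8),
        integral_add j3 ((intA q₀).const_mul 4),
        integral_add j2 ((intB q₀ p₀).const_mul 4),
        integral_add j1 ((intB p₀ q₀).const_mul 4)]
      rw [integral_const_mul, integral_const_mul, integral_const_mul, integral_const_mul,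
        integral_const_mul]
      rw [hAconst p₀, hAconst q₀, hBpair p₀ q₀ hpq₀, hBpair q₀ p₀ (Ne.symm hpq₀), ← hCdef]
      ring
    have := hlhs.symm.trans hrhs
    linarith
  -- Equation 3 : A + (N-1) C = 0
  have hCdiag : ∀ p, ∫ U, fC c₁ c₂ p p U ∂μ = A := by
    intro p
    rw [← hAconst p]
    refine integral_congr_ae (ae_of_all _ fun U => ?_)
    simp only [fC, fA]
    exact diag_re _ _
  have horthpt : ∀ U : Matrix.unitaryGroup ι ℂ, ∑ p : ι, ∑ q : ι, fC c₁ c₂ p q U = 0 := by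
    intro U
    have h0 := col_orth U hc
    have hz : ∀ p q : ι, fC c₁ c₂ p q U
        = (((U : Matrix ι ι ℂ) p c₁ * (starRingEnd ℂ) ((U : Matrix ι ι ℂ) p c₂)) *
            (starRingEnd ℂ) ((U : Matrix ι ι ℂ) q c₁ * (starRingEnd ℂ) ((U : Matrix ι ι ℂ) q c₂))).re := by
      intro p q
      simp only [fC]
      congr 1
      rw [_root_.map_mul, Complex.conj_conj]
      ring
    calc ∑ p : ι, ∑ q : ι, fC c₁ c₂ p q U
        = (∑ p : ι, ∑ q : ι,
            ((U : Matrix ι ι ℂ) p c₁ * (starRingEnd ℂ) ((U : Matrix ι ι ℂ) p c₂)) *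
              (starRingEnd ℂ) ((U : Matrix ι ι ℂ) q c₁ *
                (starRingEnd ℂ) ((U : Matrix ι ι ℂ) q c₂))).re := by
          rw [Complex.re_sum]
          refine Finset.sum_congr rfl fun p _ => ?_
          rw [Complex.re_sum]
          exact Finset.sum_congr rfl fun q _ => hz p q
      _ = ((∑ p : ι, (U : Matrix ι ι ℂ) p c₁ * (starRingEnd ℂ) ((U : Matrix ι ι ℂ) p c₂)) *
            (starRingEnd ℂ) (∑ q : ι, (U : Matrix ι ι ℂ) q c₁ *
              (starRingEnd ℂ) ((U : Matrix ι ι ℂ) q c₂))).re := by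
          rw [map_sum, Finset.sum_mul_sum]
      _ = 0 := by rw [h0]; simp
  have hdouble : ∑ p : ι, ∑ q : ι, ∫ U, fC c₁ c₂ p q U ∂μ = 0 := by
    have h1 : ∀ p : ι, ∑ q : ι, ∫ U, fC c₁ c₂ p q U ∂μ = ∫ U, ∑ q : ι, fC c₁ c₂ p q U ∂μ :=
      fun p => (integral_finset_sum Finset.univ (fun q _ => intC p q)).symm
    rw [Finset.sum_congr rfl fun p _ => h1 p,
      ← integral_finset_sum Finset.univ
        (fun p _ => integrable_finset_sum Finset.univ (fun q _ => intC p q)),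
      integral_congr_ae (ae_of_all _ horthpt)]
    simp
  have hE3 : A + (N - 1) * C = 0 := by
    have hinner : ∀ p : ι, ∑ q : ι, ∫ U, fC c₁ c₂ p q U ∂μ = A + (N - 1) * C := by
      intro p
      rw [← Finset.add_sum_erase Finset.univ _ (Finset.mem_univ p), hCdiag p]
      have hoff : ∑ q ∈ Finset.univ.erase p, ∫ U, fC c₁ c₂ p q U ∂μ = (N - 1) * C := by
        rw [Finset.sum_congr rfl fun q hq =>
          hCpair p q (Ne.symm (Finset.ne_of_mem_erase hq))]
        rw [Finset.sum_const, nsmul_eq_mul, hcard_erase]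
      rw [hoff]
    rw [Finset.sum_congr rfl fun p _ => hinner p, Finset.sum_const, Finset.card_univ,
      nsmul_eq_mul, ← hNdef] at hdouble
    have hNne : N ≠ 0 := by linarith
    exact (mul_eq_zero.mp hdouble).resolve_left hNne
  -- solve the linear system
  have hA' : N * (N + 1) * A = 1 := by
    linear_combination hE1 + (N * (N - 1)) * hE2 + N * hE3
  have hB' : ((N - 1) * (N + 1)) * B = 1 := by
    linear_combination hA' + (-(N ^ 2 - 1)) * hE2 + (-(N + 1)) * hE3
  constructor
  · intro p
    rw [hAconst p, eq_div_iff (by nlinarith : N * (N + 1) ≠ 0)]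
    linarith [hA']
  · intro p q hpq
    rw [hBpair p q hpq, eq_div_iff (by nlinarith : N ^ 2 - 1 ≠ 0)]
    linear_combination hB'

end moments

end core


/-- Moments of the super-decohered transition matrix `T_{ji} = Σ_k |U_{(j,k),i}|²` of a
Haar-random Stinespring channel: means are `1/d₂`, same-row covariances are negative and
different-row covariances are positive, with the stated exact values. In particular the
columns of `T` are not independent. -/
theorem transition_matrix_covariances (d₁ d₂ M : ℕ)
    (hd₁ : 2 ≤ d₁) (hd₂ : 2 ≤ d₂) (hM : 0 < M)
    (h : d₁ ≤ d₂ * M) (h2 : 2 ≤ d₂ * M)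
    (μ : Measure (Matrix.unitaryGroup (Fin d₂ × Fin M) ℂ)) [IsProbabilityMeasure μ]
    (hμ : ∀ g : Matrix.unitaryGroup (Fin d₂ × Fin M) ℂ, μ.map (fun x => g * x) = μ)
    (T : Matrix.unitaryGroup (Fin d₂ × Fin M) ℂ → Fin d₂ → Fin d₁ → ℝ)
    (hT : ∀ U j i, T U j i = ∑ k : Fin M,
        Complex.normSq ((U : Matrix (Fin d₂ × Fin M) (Fin d₂ × Fin M) ℂ) (j, k)
          (finProdFinEquiv.symm (Fin.castLE h i)))) :
    (∀ j i, ∫ U, T U j i ∂μ = 1 / (d₂ : ℝ)) ∧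
    (∀ (j : Fin d₂) (i₁ i₂ : Fin d₁), i₁ ≠ i₂ →
      (∫ U, T U j i₁ * T U j i₂ ∂μ) - (∫ U, T U j i₁ ∂μ) * (∫ U, T U j i₂ ∂μ) =
        ((d₂ : ℝ) * (M : ℝ) ^ 2 - 1) / ((d₂ : ℝ) ^ 3 * (M : ℝ) ^ 2 - (d₂ : ℝ)) -
          1 / (d₂ : ℝ) ^ 2 ∧
      ((d₂ : ℝ) * (M : ℝ) ^ 2 - 1) / ((d₂ : ℝ) ^ 3 * (M : ℝ) ^ 2 - (d₂ : ℝ)) -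
          1 / (d₂ : ℝ) ^ 2 < 0) ∧
    (∀ (j₁ j₂ : Fin d₂) (i₁ i₂ : Fin d₁), j₁ ≠ j₂ → i₁ ≠ i₂ →
      (∫ U, T U j₁ i₁ * T U j₂ i₂ ∂μ) - (∫ U, T U j₁ i₁ ∂μ) * (∫ U, T U j₂ i₂ ∂μ) =
        (M : ℝ) ^ 2 / (((d₂ : ℝ) * (M : ℝ)) ^ 2 - 1) - 1 / (d₂ : ℝ) ^ 2 ∧
      0 < (M : ℝ) ^ 2 / (((d₂ : ℝ) * (M : ℝ)) ^ 2 - 1) - 1 / (d₂ : ℝ) ^ 2) := by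
  classical
  have hcardN : Fintype.card (Fin d₂ × Fin M) = d₂ * M := by simp
  have hcard : (Fintype.card (Fin d₂ × Fin M) : ℝ) = (d₂ : ℝ) * (M : ℝ) := by
    rw [hcardN]; push_cast; ring
  have hn : 1 < Fintype.card (Fin d₂ × Fin M) := by omega
  set c : Fin d₁ → Fin d₂ × Fin M := fun i => finProdFinEquiv.symm (Fin.castLE h i) with hcdef
  have hcinj : ∀ i₁ i₂ : Fin d₁, i₁ ≠ i₂ → c i₁ ≠ c i₂ := by
    intro i₁ i₂ hi hcon
    apply hi
    have h1 : Fin.castLE h i₁ = Fin.castLE h i₂ := finProdFinEquiv.symm.injective hcon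
    have h2' : (i₁ : ℕ) = (i₂ : ℕ) := by
      have := congrArg Fin.val h1
      simpa using this
    exact Fin.ext h2'
  have hD : (2 : ℝ) ≤ (d₂ : ℝ) := by exact_mod_cast hd₂
  have hm : (1 : ℝ) ≤ (M : ℝ) := by exact_mod_cast hM
  have hDM : (2 : ℝ) ≤ (d₂ : ℝ) * (M : ℝ) := by
    calc (2 : ℝ) ≤ ((d₂ * M : ℕ) : ℝ) := by exact_mod_cast h2
    _ = (d₂ : ℝ) * M := by push_cast; ring
  have hDne : (d₂ : ℝ) ≠ 0 := by linarith
  have hMne : (M : ℝ) ≠ 0 := by linarith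
  -- means
  have hmean : ∀ j i, ∫ U, T U j i ∂μ = 1 / (d₂ : ℝ) := by
    intro j i
    have hTf : (fun U : Matrix.unitaryGroup (Fin d₂ × Fin M) ℂ => T U j i)
        = fun U : Matrix.unitaryGroup (Fin d₂ × Fin M) ℂ => ∑ k : Fin M,
          Complex.normSq ((U : Matrix (Fin d₂ × Fin M) (Fin d₂ × Fin M) ℂ) (j, k) (c i)) :=
      funext fun U => hT U j i
    rw [hTf, integral_finset_sum _ (fun k _ => integrable_of_bdd μ (nsq_meas (j, k) (c i)) 1
      (fun U => by rw [abs_of_nonneg (Complex.normSq_nonneg _)]; exact nsq_le_one U _ _))]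
    rw [Finset.sum_congr rfl fun k _ => haar_L1 μ hμ (j, k) (c i)]
    rw [Finset.sum_const, Finset.card_univ, Fintype.card_fin, nsmul_eq_mul, hcard]
    field_simp
  -- second moments as double sums
  have intB : ∀ (i₁ i₂ : Fin d₁) (p q : Fin d₂ × Fin M),
      Integrable (fB (c i₁) (c i₂) p q) μ := fun i₁ i₂ p q =>
    integrable_of_bdd μ (fB_meas _ _ p q) 1 (fB_bdd _ _ p q)
  have hprod : ∀ (j₁ j₂ : Fin d₂) (i₁ i₂ : Fin d₁),
      ∫ U, T U j₁ i₁ * T U j₂ i₂ ∂μ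
        = ∑ k : Fin M, ∑ k' : Fin M, ∫ U, fB (c i₁) (c i₂) (j₁, k) (j₂, k') U ∂μ := by
    intro j₁ j₂ i₁ i₂
    have hTf : (fun U : Matrix.unitaryGroup (Fin d₂ × Fin M) ℂ => T U j₁ i₁ * T U j₂ i₂)
        = fun U => ∑ k : Fin M, ∑ k' : Fin M, fB (c i₁) (c i₂) (j₁, k) (j₂, k') U := by
      funext U
      rw [hT U j₁ i₁, hT U j₂ i₂, Finset.sum_mul_sum]
      simp only [fB]
      rfl
    rw [hTf, integral_finset_sum _ (fun k _ =>
      integrable_finset_sum _ (fun k' _ => intB i₁ i₂ (j₁, k) (j₂, k')))]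
    exact Finset.sum_congr rfl fun k _ =>
      integral_finset_sum _ (fun k' _ => intB i₁ i₂ (j₁, k) (j₂, k'))
  refine ⟨hmean, ?_, ?_⟩
  · -- same row
    intro j i₁ i₂ hi
    obtain ⟨hA, hB⟩ := haar_L23 (c i₁) (c i₂) μ hμ hn (hcinj i₁ i₂ hi)
    rw [hcard] at hA hB
    have hval : ∀ k k' : Fin M, ∫ U, fB (c i₁) (c i₂) (j, k) (j, k') U ∂μ
        = if k' = k then 1 / ((d₂ : ℝ) * M * ((d₂ : ℝ) * M + 1))
          else 1 / (((d₂ : ℝ) * M) ^ 2 - 1) := by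
      intro k k'
      by_cases hkk : k' = k
      · rw [if_pos hkk, hkk]
        exact hA (j, k)
      · rw [if_neg hkk]
        refine hB (j, k) (j, k') fun hcon => hkk ?_
        exact (congrArg Prod.snd hcon).symm
    have hinner : ∀ k : Fin M, ∑ k' : Fin M, ∫ U, fB (c i₁) (c i₂) (j, k) (j, k') U ∂μ
        = 1 / ((d₂ : ℝ) * M * ((d₂ : ℝ) * M + 1))
          + ((M : ℝ) - 1) * (1 / (((d₂ : ℝ) * M) ^ 2 - 1)) := by
      intro k
      rw [Finset.sum_congr rfl fun k' _ => hval k k']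
      have hsplit : ∀ k' : Fin M,
          (if k' = k then 1 / ((d₂ : ℝ) * M * ((d₂ : ℝ) * M + 1))
            else 1 / (((d₂ : ℝ) * M) ^ 2 - 1))
          = 1 / (((d₂ : ℝ) * M) ^ 2 - 1)
            + (if k' = k then 1 / ((d₂ : ℝ) * M * ((d₂ : ℝ) * M + 1))
                - 1 / (((d₂ : ℝ) * M) ^ 2 - 1) else 0) := by
        intro k'
        by_cases hkk : k' = k <;> simp [hkk]
      rw [Finset.sum_congr rfl fun k' _ => hsplit k', Finset.sum_add_distrib,
        Finset.sum_const, Finset.card_univ, Fintype.card_fin, nsmul_eq_mul,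
        Finset.sum_ite_eq' Finset.univ k
          (fun _ => 1 / ((d₂ : ℝ) * M * ((d₂ : ℝ) * M + 1)) - 1 / (((d₂ : ℝ) * M) ^ 2 - 1)),
        if_pos (Finset.mem_univ k)]
      ring
    rw [hprod j j i₁ i₂, Finset.sum_congr rfl fun k _ => hinner k, Finset.sum_const,
      Finset.card_univ, Fintype.card_fin, nsmul_eq_mul, hmean j i₁, hmean j i₂]
    have hden1 : (0 : ℝ) < (d₂ : ℝ) * M * ((d₂ : ℝ) * M + 1) := by nlinarith
    have hden2 : (0 : ℝ) < ((d₂ : ℝ) * M) ^ 2 - 1 := by nlinarith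
    have hden3 : (0 : ℝ) < (d₂ : ℝ) ^ 3 * (M : ℝ) ^ 2 - (d₂ : ℝ) := by nlinarith
    constructor
    · have hmain : (M : ℝ) * (1 / ((d₂ : ℝ) * M * ((d₂ : ℝ) * M + 1))
            + ((M : ℝ) - 1) * (1 / (((d₂ : ℝ) * M) ^ 2 - 1)))
          = ((d₂ : ℝ) * (M : ℝ) ^ 2 - 1) / ((d₂ : ℝ) ^ 3 * (M : ℝ) ^ 2 - (d₂ : ℝ)) := by
        have e1 := hden1.ne'
        have e2 := hden2.ne'
        have e3 := hden3.ne'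
        rw [mul_one_div, div_add_div _ _ e1 e2, ← mul_div_assoc,
          div_eq_div_iff (mul_ne_zero e1 e2) e3]
        ring
      rw [hmain]
      ring
    · have hlt : ((d₂ : ℝ) * (M : ℝ) ^ 2 - 1) / ((d₂ : ℝ) ^ 3 * (M : ℝ) ^ 2 - (d₂ : ℝ))
          < 1 / (d₂ : ℝ) ^ 2 := by
        rw [div_lt_div_iff₀ hden3 (by positivity)]
        nlinarith
      linarith
  · -- different rows
    intro j₁ j₂ i₁ i₂ hj hi
    obtain ⟨hA, hB⟩ := haar_L23 (c i₁) (c i₂) μ hμ hn (hcinj i₁ i₂ hi)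
    rw [hcard] at hA hB
    have hval : ∀ k k' : Fin M, ∫ U, fB (c i₁) (c i₂) (j₁, k) (j₂, k') U ∂μ
        = 1 / (((d₂ : ℝ) * M) ^ 2 - 1) := by
      intro k k'
      refine hB (j₁, k) (j₂, k') fun hcon => hj ?_
      exact congrArg Prod.fst hcon
    rw [hprod j₁ j₂ i₁ i₂]
    rw [Finset.sum_congr rfl fun k _ => Finset.sum_congr rfl fun k' _ => hval k k']
    simp only [Finset.sum_const, Finset.card_univ, Fintype.card_fin, nsmul_eq_mul]
    rw [hmean j₁ i₁, hmean j₂ i₂]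
    have hden2 : (0 : ℝ) < ((d₂ : ℝ) * M) ^ 2 - 1 := by nlinarith
    constructor
    · have e2 := hden2.ne'
      have hmain : (M : ℝ) * ((M : ℝ) * (1 / (((d₂ : ℝ) * M) ^ 2 - 1)))
          = (M : ℝ) ^ 2 / (((d₂ : ℝ) * (M : ℝ)) ^ 2 - 1) := by
        field_simp
      rw [hmain]
      ring
    · have hlt : 1 / (d₂ : ℝ) ^ 2 < (M : ℝ) ^ 2 / (((d₂ : ℝ) * (M : ℝ)) ^ 2 - 1) := by
        rw [div_lt_div_iff₀ (by positivity) hden2]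
        nlinarith
      linarith
end
end

section
/- Let d ≥ 1 and let Φ : M_d(ℂ) → M_d(ℂ) be a linear map. Then: (i) for all density matrices ρ, σ ∈ M_d(ℂ), ‖Φ(ρ) − Φ(σ)‖₁ ≤ ‖ρ − σ‖₁ · sup_{‖x‖ = 1} ‖Φ(|x⟩⟨x|) − 𝟙_d/d‖₁, the supremum over unit vectors x ∈ ℂ^d; and (ii) sup_{‖x‖=1} ‖Φ(|x⟩⟨x|) − 𝟙_d/d‖₁ ≤ ‖Φ − Φ_*‖_◇, where Φ_*(X) = Tr(X)·𝟙_d/d is the maximally depolarizing channel and ‖Ψ‖_◇ := sup{ ‖(Ψ ⊗ id_d)(X)‖₁ / ‖X‖₁ : 0 ≠ X ∈ M_{d²}(ℂ) } is the diamond norm. Consequently, the trace-norm Lipschitz constant of Φ on the set of density matrices is at most ‖Φ − Φ_*‖_◇. -/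
open Matrix
open scoped ComplexOrder

noncomputable section

/-- The trace (Schatten 1-) norm of a complex matrix: `‖A‖₁ = Tr √(A†A)`. -/
def traceNorm {n : Type*} [Fintype n] [DecidableEq n] (A : Matrix n n ℂ) : ℝ :=
  ((Matrix.posSemidef_conjTranspose_mul_self A).1.eigenvectorUnitary.1 *
    diagonal (((↑) : ℝ → ℂ) ∘ (√·) ∘ (Matrix.posSemidef_conjTranspose_mul_self A).1.eigenvalues) *
    (star (Matrix.posSemidef_conjTranspose_mul_self A).1.eigenvectorUnitary : Matrix n n ℂ)).trace.re

/-- The extension `Ψ ⊗ id_d` of a linear map on `M_d(ℂ)` to `M_{d²}(ℂ) ≅ M_d(ℂ) ⊗ M_d(ℂ)`,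
acting on the first tensor factor. -/
def tensorId (d : ℕ) (Ψ : Matrix (Fin d) (Fin d) ℂ →ₗ[ℂ] Matrix (Fin d) (Fin d) ℂ)
    (X : Matrix (Fin d × Fin d) (Fin d × Fin d) ℂ) :
    Matrix (Fin d × Fin d) (Fin d × Fin d) ℂ :=
  Matrix.of fun p q => Ψ (Matrix.of fun a b => X (a, p.2) (b, q.2)) p.1 q.1

/-- The diamond norm `‖Ψ‖_◇ = sup_{X ≠ 0} ‖(Ψ ⊗ id_d)(X)‖₁ / ‖X‖₁`. -/
def diamondNorm (d : ℕ) (Ψ : Matrix (Fin d) (Fin d) ℂ →ₗ[ℂ] Matrix (Fin d) (Fin d) ℂ) : ℝ :=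
  ⨆ X : {X : Matrix (Fin d × Fin d) (Fin d × Fin d) ℂ // X ≠ 0},
    traceNorm (tensorId d Ψ X.1) / traceNorm X.1

/-- The maximally depolarizing channel `Φ_*(X) = Tr(X)·𝟙_d/d` as a linear map. -/
def depolarizing (d : ℕ) : Matrix (Fin d) (Fin d) ℂ →ₗ[ℂ] Matrix (Fin d) (Fin d) ℂ :=
  (Matrix.traceLinearMap (Fin d) ℂ ℂ).smulRight ((d : ℂ)⁻¹ • (1 : Matrix (Fin d) (Fin d) ℂ))

/-!
The trace norm is `‖A‖₁ = Tr |A|` for the continuous functional calculus `|A| = CFC.abs A`. The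
polar decomposition `A = W |A|` with `‖W‖ ≤ 1` in operator norm gives the duality
`‖A‖₁ = max_{‖M‖ ≤ 1} Re Tr (M A)`, hence the triangle inequality, and comparing with the operator
norm bounds every linear map in trace norm, so all the suprema involved are over bounded families.

(i) Diagonalize `ρ - σ = ∑ λᵢ |uᵢ⟩⟨uᵢ|`. Since `∑ λᵢ = Tr (ρ - σ) = 0`,
`Φ (ρ - σ) = ∑ λᵢ (Φ |uᵢ⟩⟨uᵢ| - 𝟙/d)`, and `‖ρ - σ‖₁ = ∑ |λᵢ|`.

(ii) For a pure state `ρ = |x⟩⟨x|` one has `(Φ - Φ_*) ρ = Φ ρ - 𝟙/d`, and `X = ρ ⊗ ρ` satisfies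
`(Ψ ⊗ id) X = Ψ ρ ⊗ ρ`; the trace norm is multiplicative on Kronecker products, so the quotient in
the diamond norm at `X` is `‖Ψ ρ‖₁`.
-/

open scoped MatrixOrder Kronecker

section TraceNorm

open scoped Matrix.Norms.L2Operator

variable {n : Type*} [Fintype n] [DecidableEq n]

lemma traceNorm_eq_re_trace_abs (A : Matrix n n ℂ) : traceNorm A = (CFC.abs A).trace.re := by
  have hA := posSemidef_conjTranspose_mul_self A
  rw [CFC.abs, star_eq_conjTranspose, CFC.sqrt_eq_real_sqrt _ hA.nonneg, cfcₙ_eq_cfc, hA.1.cfc_eq]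
  rfl

lemma trace_abs_eq_traceNorm (A : Matrix n n ℂ) : (CFC.abs A).trace = traceNorm A := by
  rw [traceNorm_eq_re_trace_abs]
  exact Complex.eq_re_of_ofReal_le (nonneg_iff_posSemidef.mp (CFC.abs_nonneg A)).trace_nonneg

lemma traceNorm_of_nonneg {A : Matrix n n ℂ} (hA : 0 ≤ A) : traceNorm A = A.trace.re := by
  rw [traceNorm_eq_re_trace_abs, CFC.abs_of_nonneg A]

lemma traceNorm_nonneg (A : Matrix n n ℂ) : 0 ≤ traceNorm A := by
  have h := (nonneg_iff_posSemidef.mp (CFC.abs_nonneg A)).trace_nonneg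
  rwa [trace_abs_eq_traceNorm, Complex.zero_le_real] at h

lemma traceNorm_eq_zero_iff {A : Matrix n n ℂ} : traceNorm A = 0 ↔ A = 0 := by
  rw [← Complex.ofReal_inj, ← trace_abs_eq_traceNorm, Complex.ofReal_zero,
    (nonneg_iff_posSemidef.mp (CFC.abs_nonneg A)).trace_eq_zero_iff, CFC.abs_eq_zero_iff]

lemma traceNorm_pos {A : Matrix n n ℂ} (hA : A ≠ 0) : 0 < traceNorm A :=
  (traceNorm_nonneg A).lt_of_ne' (mt traceNorm_eq_zero_iff.mp hA)

lemma traceNorm_smul (c : ℂ) (A : Matrix n n ℂ) : traceNorm (c • A) = ‖c‖ * traceNorm A := by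
  rw [traceNorm_eq_re_trace_abs, traceNorm_eq_re_trace_abs, CFC.abs_smul, trace_smul,
    Complex.real_smul, Complex.re_ofReal_mul]

lemma Matrix.norm_apply_le_l2_opNorm {m : Type*} [Fintype m] (Y : Matrix m n ℂ) (i : m) (j : n) :
    ‖Y i j‖ ≤ ‖Y‖ := by
  have h := Y.l2_opNorm_mulVec (EuclideanSpace.single j 1)
  simp only [PiLp.norm_single, norm_one, mul_one] at h
  refine le_trans (le_of_eq ?_) ((PiLp.norm_apply_le _ i).trans h)
  simp [EuclideanSpace.single]

lemma norm_trace_mul_le_of_nonneg (X : Matrix n n ℂ) {P : Matrix n n ℂ} (hP : 0 ≤ P) :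
    ‖(X * P).trace‖ ≤ ‖X‖ * P.trace.re := by
  have hH : P.IsHermitian := (nonneg_iff_posSemidef.mp hP).1
  set U : Matrix n n ℂ := hH.eigenvectorUnitary.1
  have hU : U ∈ unitary (Matrix n n ℂ) := hH.eigenvectorUnitary.2
  have hev := (nonneg_iff_posSemidef.mp hP).eigenvalues_nonneg
  have htr (Y : Matrix n n ℂ) : (Y * P).trace = ∑ i, hH.eigenvalues i * (star U * Y * U) i i := by
    conv_lhs => rw [hH.spectral_theorem, Unitary.conjStarAlgAut_apply, ← mul_assoc, ← mul_assoc,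
      trace_mul_cycle, ← mul_assoc, trace_mul_comm _ (diagonal _)]
    simp [trace, U]
  have hPtr : P.trace.re = ∑ i, hH.eigenvalues i := by
    simpa [Unitary.star_mul_self_of_mem hU] using congrArg Complex.re (htr 1)
  have hY : ‖star U * X * U‖ = ‖X‖ := by
    rw [CStarRing.norm_mul_mem_unitary _ hU,
      CStarRing.norm_mem_unitary_mul _ (Unitary.star_mem hU)]
  rw [htr, hPtr, Finset.mul_sum]
  refine (norm_sum_le _ _).trans (Finset.sum_le_sum fun i _ => ?_)
  rw [norm_mul, Complex.norm_real, Real.norm_of_nonneg (hev i), mul_comm, ← hY]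
  exact mul_le_mul_of_nonneg_right (norm_apply_le_l2_opNorm _ i i) (hev i)

/- `W = A |A|⁻¹`, the inverse taken in the functional calculus of `t ↦ t⁻¹`: with `0⁻¹ = 0` it
inverts `|A|` on its support and vanishes on its kernel, which is also the kernel of `A`. -/
lemma exists_polar_decomposition (A : Matrix n n ℂ) :
    ∃ W : Matrix n n ℂ, ‖W‖ ≤ 1 ∧ A = W * CFC.abs A ∧ star W * A = CFC.abs A := by
  set P := CFC.abs A
  have hsa : IsSelfAdjoint P := (CFC.abs_nonneg A).isSelfAdjoint
  have hcont (f : ℝ → ℝ) : ContinuousOn f (spectrum ℝ P) := P.finite_real_spectrum.continuousOn f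
  have hmul (f g : ℝ → ℝ) : cfc f P * cfc g P = cfc (fun t : ℝ => f t * g t) P :=
    (cfc_mul f g P (hcont f) (hcont g)).symm
  have hstar (f : ℝ → ℝ) : star (cfc f P) = cfc f P := (cfc_predicate f P).star_eq
  have hP : P = cfc (fun t : ℝ => t) P := (cfc_id' ℝ P).symm
  have hPP : star A * A = cfc (fun t : ℝ => t * t) P := by
    rw [← CFC.abs_mul_abs, ← hmul, ← hP]
  refine ⟨A * cfc (fun t : ℝ => t⁻¹) P, ?_, ?_, ?_⟩
  · have h := CStarRing.norm_star_mul_self (x := A * cfc (fun t : ℝ => t⁻¹) P)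
    rw [star_mul, hstar, mul_assoc, ← mul_assoc (star A), hPP, hmul, hmul] at h
    have hle : ‖cfc (fun t : ℝ => t⁻¹ * (t * t * t⁻¹)) P‖ ≤ 1 := by
      refine norm_cfc_le zero_le_one fun t _ => ?_
      rcases eq_or_ne t 0 with rfl | ht
      · simp
      · simp [field]
    nlinarith [norm_nonneg (A * cfc (fun t : ℝ => t⁻¹) P)]
  · have hAF : A * cfc (fun t : ℝ => 1 - t⁻¹ * t) P = 0 := by
      rw [← CStarRing.star_mul_self_eq_zero_iff, star_mul, hstar, mul_assoc,
        ← mul_assoc (star A), hPP, hmul, hmul, ← cfc_zero ℝ P]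
      refine cfc_congr fun t _ => ?_
      rcases eq_or_ne t 0 with rfl | ht
      · simp
      · simp [ht]
    have hsum : cfc (fun t : ℝ => 1 - t⁻¹ * t) P + cfc (fun t : ℝ => t⁻¹) P * P = 1 := by
      nth_rewrite 3 [hP]
      rw [hmul, ← cfc_add P _ _ (hcont _) (hcont _), ← cfc_const_one ℝ P]
      exact cfc_congr fun t _ => by ring
    calc A = A * (cfc (fun t : ℝ => 1 - t⁻¹ * t) P + cfc (fun t : ℝ => t⁻¹) P * P) := by
          rw [hsum, mul_one]
      _ = A * cfc (fun t : ℝ => t⁻¹) P * P := by rw [mul_add, hAF, zero_add, mul_assoc]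
  · rw [star_mul, hstar, mul_assoc, hPP, hmul]
    nth_rewrite 2 [hP]
    refine cfc_congr fun t _ => ?_
    rcases eq_or_ne t 0 with rfl | ht
    · simp
    · field_simp

lemma norm_trace_mul_le (M A : Matrix n n ℂ) : ‖(M * A).trace‖ ≤ ‖M‖ * traceNorm A := by
  obtain ⟨W, hW, hA, -⟩ := exists_polar_decomposition A
  conv_lhs => rw [hA, ← mul_assoc]
  refine (norm_trace_mul_le_of_nonneg _ (CFC.abs_nonneg A)).trans ?_
  rw [← traceNorm_eq_re_trace_abs]
  gcongr
  · exact traceNorm_nonneg A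
  · exact (norm_mul_le M W).trans (mul_le_of_le_one_right (norm_nonneg M) hW)

lemma exists_norm_le_one_re_trace_mul_eq_traceNorm (A : Matrix n n ℂ) :
    ∃ M : Matrix n n ℂ, ‖M‖ ≤ 1 ∧ (M * A).trace.re = traceNorm A := by
  obtain ⟨W, hW, -, hWA⟩ := exists_polar_decomposition A
  exact ⟨star W, by rwa [norm_star], by rw [hWA, traceNorm_eq_re_trace_abs]⟩

lemma traceNorm_add_le (A B : Matrix n n ℂ) : traceNorm (A + B) ≤ traceNorm A + traceNorm B := by
  obtain ⟨M, hM, hMAB⟩ := exists_norm_le_one_re_trace_mul_eq_traceNorm (A + B)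
  rw [← hMAB, mul_add, trace_add, Complex.add_re]
  have hA := (Complex.re_le_norm _).trans (norm_trace_mul_le M A)
  have hB := (Complex.re_le_norm _).trans (norm_trace_mul_le M B)
  nlinarith [traceNorm_nonneg A, traceNorm_nonneg B]

lemma traceNorm_neg (A : Matrix n n ℂ) : traceNorm (-A) = traceNorm A := by
  rw [← neg_one_smul ℂ A, traceNorm_smul, norm_neg, norm_one, one_mul]

lemma traceNorm_sub_le (A B : Matrix n n ℂ) : traceNorm (A - B) ≤ traceNorm A + traceNorm B := by
  simpa [sub_eq_add_neg, traceNorm_neg] using traceNorm_add_le A (-B)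

lemma traceNorm_sum_le {ι : Type*} (s : Finset ι)
    (f : ι → Matrix n n ℂ) : traceNorm (∑ i ∈ s, f i) ≤ ∑ i ∈ s, traceNorm (f i) :=
  Finset.le_sum_of_subadditive traceNorm (traceNorm_eq_zero_iff.mpr rfl).le traceNorm_add_le s f

lemma norm_le_re_trace_of_nonneg {P : Matrix n n ℂ} (hP : 0 ≤ P) : ‖P‖ ≤ P.trace.re := by
  have hH : P.IsHermitian := (nonneg_iff_posSemidef.mp hP).1
  have hev := (nonneg_iff_posSemidef.mp hP).eigenvalues_nonneg
  have hU := hH.eigenvectorUnitary.2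
  have hdiag : ‖P‖ = ‖diagonal (RCLike.ofReal ∘ hH.eigenvalues : n → ℂ)‖ := by
    conv_lhs => rw [hH.spectral_theorem, Unitary.conjStarAlgAut_apply]
    rw [CStarRing.norm_mul_mem_unitary _ (Unitary.star_mem hU), CStarRing.norm_mem_unitary_mul _ hU]
  rw [hdiag, l2_opNorm_diagonal, hH.trace_eq_sum_eigenvalues, Complex.re_sum]
  refine (pi_norm_le_iff_of_nonneg (Finset.sum_nonneg fun i _ => hev i)).mpr fun i => ?_
  simpa [abs_of_nonneg (hev i)] using Finset.single_le_sum (fun j _ => hev j) (Finset.mem_univ i)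

lemma norm_le_traceNorm (A : Matrix n n ℂ) : ‖A‖ ≤ traceNorm A := by
  rw [← CFC.norm_abs, traceNorm_eq_re_trace_abs]
  exact norm_le_re_trace_of_nonneg (CFC.abs_nonneg A)

lemma traceNorm_le_card_mul_norm (A : Matrix n n ℂ) : traceNorm A ≤ Fintype.card n * ‖A‖ := by
  rw [← CFC.norm_abs, ← Complex.norm_of_nonneg (traceNorm_nonneg A), ← trace_abs_eq_traceNorm]
  calc ‖(CFC.abs A).trace‖ ≤ ∑ i : n, ‖CFC.abs A‖ :=
        (norm_sum_le _ _).trans (Finset.sum_le_sum fun i _ => norm_apply_le_l2_opNorm _ i i)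
    _ = Fintype.card n * ‖CFC.abs A‖ := by simp

lemma LinearMap.exists_traceNorm_map_le {m : Type*} [Fintype m] [DecidableEq m]
    (T : Matrix n n ℂ →ₗ[ℂ] Matrix m m ℂ) : ∃ C, ∀ X, traceNorm (T X) ≤ C * traceNorm X := by
  let T' := LinearMap.toContinuousLinearMap T
  refine ⟨Fintype.card m * ‖T'‖, fun X => ?_⟩
  calc traceNorm (T X) ≤ Fintype.card m * ‖T' X‖ := traceNorm_le_card_mul_norm _
    _ ≤ Fintype.card m * (‖T'‖ * traceNorm X) := by
      gcongr
      exact (T'.le_opNorm X).trans (by gcongr; exact norm_le_traceNorm X)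
    _ = _ := by ring

end TraceNorm

section Kronecker

variable {n m : Type*} [Fintype n] [DecidableEq n] [Fintype m] [DecidableEq m]

lemma CFC.abs_kronecker (A : Matrix n n ℂ) (B : Matrix m m ℂ) :
    CFC.abs (A ⊗ₖ B) = CFC.abs A ⊗ₖ CFC.abs B := by
  have hnonneg : 0 ≤ CFC.abs A ⊗ₖ CFC.abs B := nonneg_iff_posSemidef.mpr
    ((nonneg_iff_posSemidef.mp (CFC.abs_nonneg A)).kronecker
      (nonneg_iff_posSemidef.mp (CFC.abs_nonneg B)))
  refine CFC.sqrt_unique ?_ hnonneg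
  simp only [← mul_kronecker_mul, CFC.abs_mul_abs, star_eq_conjTranspose, conjTranspose_kronecker]

lemma traceNorm_kronecker (A : Matrix n n ℂ) (B : Matrix m m ℂ) :
    traceNorm (A ⊗ₖ B) = traceNorm A * traceNorm B := by
  rw [← Complex.ofReal_inj, Complex.ofReal_mul, ← trace_abs_eq_traceNorm, CFC.abs_kronecker,
    trace_kronecker, trace_abs_eq_traceNorm, trace_abs_eq_traceNorm]

end Kronecker

lemma tensorId_kronecker {d : ℕ} (Ψ : Matrix (Fin d) (Fin d) ℂ →ₗ[ℂ] Matrix (Fin d) (Fin d) ℂ)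
    (B C : Matrix (Fin d) (Fin d) ℂ) : tensorId d Ψ (B ⊗ₖ C) = Ψ B ⊗ₖ C := by
  ext ⟨a, i⟩ ⟨b, j⟩
  have hslice : (of fun a' b' => (B ⊗ₖ C) (a', i) (b', j)) = C i j • B := by
    ext; simp [mul_comm]
  change Ψ _ a b = Ψ B a b * C i j
  rw [hslice, map_smul, Matrix.smul_apply, smul_eq_mul, mul_comm]

def tensorIdₗ (d : ℕ) (Ψ : Matrix (Fin d) (Fin d) ℂ →ₗ[ℂ] Matrix (Fin d) (Fin d) ℂ) :
    Matrix (Fin d × Fin d) (Fin d × Fin d) ℂ →ₗ[ℂ] Matrix (Fin d × Fin d) (Fin d × Fin d) ℂ where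
  toFun := tensorId d Ψ
  map_add' X Y := by
    ext p q
    have h : (of fun a b => (X + Y) (a, p.2) (b, q.2)) =
        of (fun a b => X (a, p.2) (b, q.2)) + of fun a b => Y (a, p.2) (b, q.2) := by
      ext; simp
    change Ψ _ p.1 q.1 = Ψ _ p.1 q.1 + Ψ _ p.1 q.1
    rw [h, map_add, Matrix.add_apply]
  map_smul' c X := by
    ext p q
    have h : (of fun a b => (c • X) (a, p.2) (b, q.2)) = c • of fun a b => X (a, p.2) (b, q.2) := by
      ext; simp
    change Ψ _ p.1 q.1 = c * Ψ _ p.1 q.1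
    rw [h, map_smul, Matrix.smul_apply, smul_eq_mul]

namespace Matrix.IsHermitian

variable {n : Type*} [Fintype n] [DecidableEq n] {H : Matrix n n ℂ} (hH : H.IsHermitian)

lemma eq_sum_eigenvalues_smul_vecMulVec :
    H = ∑ i, (hH.eigenvalues i : ℂ) •
      vecMulVec (hH.eigenvectorBasis i) (star ⇑(hH.eigenvectorBasis i)) := by
  conv_lhs => rw [hH.spectral_theorem, Unitary.conjStarAlgAut_apply]
  ext x y
  rw [mul_apply]
  simp only [mul_diagonal, eigenvectorUnitary_apply, Matrix.sum_apply, smul_apply,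
    vecMulVec_apply, star_apply, Pi.star_apply, Function.comp_apply, smul_eq_mul]
  exact Finset.sum_congr rfl fun i _ => by rw [mul_right_comm, mul_comm]; rfl

lemma traceNorm_eq_sum_abs_eigenvalues : traceNorm H = ∑ i, |hH.eigenvalues i| := by
  rw [traceNorm_eq_re_trace_abs, CFC.abs_eq_cfc_norm H hH.isSelfAdjoint, cfc_eq hH, IsHermitian.cfc,
    Unitary.conjStarAlgAut_apply, trace_mul_cycle,
    Unitary.star_mul_self_of_mem hH.eigenvectorUnitary.2]
  simp [trace]

lemma sum_normSq_eigenvectorBasis (i : n) : ∑ j, Complex.normSq (hH.eigenvectorBasis i j) = 1 := by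
  have h := hH.eigenvectorBasis.orthonormal.1 i
  rw [EuclideanSpace.norm_eq, Real.sqrt_eq_one] at h
  simpa [Complex.normSq_eq_norm_sq] using h

end Matrix.IsHermitian

section PureStates

variable {n m : Type*} [Fintype n] [DecidableEq n] [Fintype m] [DecidableEq m]

lemma trace_vecMulVec_star_self {n : Type*} [Fintype n] (x : n → ℂ) :
    (vecMulVec x (star x)).trace = ((∑ i, Complex.normSq (x i) : ℝ) : ℂ) := by
  simp [trace_vecMulVec, dotProduct, Complex.mul_conj]

lemma traceNorm_vecMulVec_star_self (x : n → ℂ) :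
    traceNorm (vecMulVec x (star x)) = ∑ i, Complex.normSq (x i) := by
  rw [traceNorm_of_nonneg (posSemidef_vecMulVec_self_star x).nonneg, trace_vecMulVec_star_self,
    Complex.ofReal_re]

lemma bddAbove_range_traceNorm_map_vecMulVec_sub (Φ : Matrix n n ℂ →ₗ[ℂ] Matrix m m ℂ)
    (C : Matrix m m ℂ) :
    BddAbove (Set.range fun x : {x : n → ℂ // ∑ i, Complex.normSq (x i) = 1} =>
      traceNorm (Φ (vecMulVec x.1 (star x.1)) - C)) := by
  obtain ⟨K, hK⟩ := Φ.exists_traceNorm_map_le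
  refine ⟨K + traceNorm C, ?_⟩
  rintro _ ⟨⟨x, hx⟩, rfl⟩
  have := hK (vecMulVec x (star x))
  rw [traceNorm_vecMulVec_star_self, hx, mul_one] at this
  linarith [traceNorm_sub_le (Φ (vecMulVec x (star x))) C]

lemma traceNorm_map_le_traceNorm_mul_iSup (Φ : Matrix n n ℂ →ₗ[ℂ] Matrix m m ℂ)
    (C : Matrix m m ℂ) {H : Matrix n n ℂ} (hH : H.IsHermitian) (htr : H.trace = 0) :
    traceNorm (Φ H) ≤ traceNorm H *
      ⨆ x : {x : n → ℂ // ∑ i, Complex.normSq (x i) = 1},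
        traceNorm (Φ (vecMulVec x.1 (star x.1)) - C) := by
  set S := ⨆ x : {x : n → ℂ // ∑ i, Complex.normSq (x i) = 1},
    traceNorm (Φ (vecMulVec x.1 (star x.1)) - C)
  set u : n → n → ℂ := fun i => hH.eigenvectorBasis i
  have hu (i : n) : traceNorm (Φ (vecMulVec (u i) (star (u i))) - C) ≤ S :=
    le_ciSup (bddAbove_range_traceNorm_map_vecMulVec_sub Φ C)
      ⟨u i, hH.sum_normSq_eigenvectorBasis i⟩
  have hsum : ∑ i, (hH.eigenvalues i : ℂ) = 0 := htr ▸ hH.trace_eq_sum_eigenvalues.symm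
  have hΦH : Φ H = ∑ i, (hH.eigenvalues i : ℂ) • (Φ (vecMulVec (u i) (star (u i))) - C) := by
    conv_lhs => rw [hH.eq_sum_eigenvalues_smul_vecMulVec]
    simp only [map_sum, map_smul, smul_sub, Finset.sum_sub_distrib, ← Finset.sum_smul, hsum,
      zero_smul, sub_zero]
    rfl
  calc traceNorm (Φ H)
      ≤ ∑ i, |hH.eigenvalues i| * traceNorm (Φ (vecMulVec (u i) (star (u i))) - C) := by
        rw [hΦH]
        refine (traceNorm_sum_le _ _).trans_eq (Finset.sum_congr rfl fun i _ => ?_)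
        rw [traceNorm_smul, Complex.norm_real, Real.norm_eq_abs]
    _ ≤ ∑ i, |hH.eigenvalues i| * S := by gcongr with i; exact hu i
    _ = traceNorm H * S := by rw [← Finset.sum_mul, hH.traceNorm_eq_sum_abs_eigenvalues]

lemma traceNorm_map_sub_map_le (Φ : Matrix n n ℂ →ₗ[ℂ] Matrix m m ℂ) (C : Matrix m m ℂ)
    {ρ σ : Matrix n n ℂ} (hρ : ρ.IsHermitian) (hσ : σ.IsHermitian) (htr : ρ.trace = σ.trace) :
    traceNorm (Φ ρ - Φ σ) ≤ traceNorm (ρ - σ) *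
      ⨆ x : {x : n → ℂ // ∑ i, Complex.normSq (x i) = 1},
        traceNorm (Φ (vecMulVec x.1 (star x.1)) - C) := by
  rw [← map_sub]
  exact traceNorm_map_le_traceNorm_mul_iSup Φ C (hρ.sub hσ) (by rw [trace_sub, htr, sub_self])

end PureStates

section Diamond

variable {d : ℕ}

lemma diamondNorm_nonneg (Ψ : Matrix (Fin d) (Fin d) ℂ →ₗ[ℂ] Matrix (Fin d) (Fin d) ℂ) :
    0 ≤ diamondNorm d Ψ :=
  Real.iSup_nonneg fun _ => div_nonneg (traceNorm_nonneg _) (traceNorm_nonneg _)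

lemma bddAbove_range_traceNorm_tensorId_div
    (Ψ : Matrix (Fin d) (Fin d) ℂ →ₗ[ℂ] Matrix (Fin d) (Fin d) ℂ) :
    BddAbove (Set.range fun X : {X : Matrix (Fin d × Fin d) (Fin d × Fin d) ℂ // X ≠ 0} =>
      traceNorm (tensorId d Ψ X.1) / traceNorm X.1) := by
  obtain ⟨K, hK⟩ := (tensorIdₗ d Ψ).exists_traceNorm_map_le
  refine ⟨K, ?_⟩
  rintro _ ⟨⟨X, hX⟩, rfl⟩
  exact (div_le_iff₀ (traceNorm_pos hX)).mpr (hK X)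

lemma traceNorm_map_vecMulVec_le_diamondNorm
    (Ψ : Matrix (Fin d) (Fin d) ℂ →ₗ[ℂ] Matrix (Fin d) (Fin d) ℂ) {x : Fin d → ℂ}
    (hx : ∑ i, Complex.normSq (x i) = 1) :
    traceNorm (Ψ (vecMulVec x (star x))) ≤ diamondNorm d Ψ := by
  set ρ := vecMulVec x (star x)
  have hρ : traceNorm ρ = 1 := by rw [traceNorm_vecMulVec_star_self, hx]
  have hX : traceNorm (ρ ⊗ₖ ρ) = 1 := by rw [traceNorm_kronecker, hρ, one_mul]
  have hX0 : ρ ⊗ₖ ρ ≠ 0 := fun h => by simp [h, traceNorm_eq_zero_iff.mpr] at hX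
  have := le_ciSup (bddAbove_range_traceNorm_tensorId_div Ψ) ⟨ρ ⊗ₖ ρ, hX0⟩
  rwa [tensorId_kronecker, traceNorm_kronecker, hρ, mul_one, hX, div_one] at this

lemma depolarizing_apply_of_trace_eq_one {X : Matrix (Fin d) (Fin d) ℂ} (hX : X.trace = 1) :
    depolarizing d X = (d : ℂ)⁻¹ • 1 := by
  rw [depolarizing, LinearMap.smulRight_apply, traceLinearMap_apply, hX, one_smul]

lemma iSup_traceNorm_map_vecMulVec_sub_le_diamondNorm
    (Φ : Matrix (Fin d) (Fin d) ℂ →ₗ[ℂ] Matrix (Fin d) (Fin d) ℂ) :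
    (⨆ x : {x : Fin d → ℂ // ∑ i, Complex.normSq (x i) = 1},
        traceNorm (Φ (vecMulVec x.1 (star x.1)) - (d : ℂ)⁻¹ • 1)) ≤
      diamondNorm d (Φ - depolarizing d) := by
  refine Real.iSup_le (fun ⟨x, hx⟩ => ?_) (diamondNorm_nonneg _)
  have hρ : (vecMulVec x (star x)).trace = 1 := by
    rw [trace_vecMulVec_star_self, hx, Complex.ofReal_one]
  simpa [depolarizing_apply_of_trace_eq_one hρ] using
    traceNorm_map_vecMulVec_le_diamondNorm (Φ - depolarizing d) hx

end Diamond

theorem lipschitz_constant_le_diamond_norm_general (d : ℕ)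
    (Φ : Matrix (Fin d) (Fin d) ℂ →ₗ[ℂ] Matrix (Fin d) (Fin d) ℂ) :
    (∀ ρ σ : Matrix (Fin d) (Fin d) ℂ,
      ρ.PosSemidef → ρ.trace = 1 → σ.PosSemidef → σ.trace = 1 →
      traceNorm (Φ ρ - Φ σ) ≤ traceNorm (ρ - σ) *
        ⨆ x : {x : Fin d → ℂ // ∑ i, Complex.normSq (x i) = 1},
          traceNorm (Φ (vecMulVec x.1 (star x.1)) - (d : ℂ)⁻¹ • 1)) ∧
    ((⨆ x : {x : Fin d → ℂ // ∑ i, Complex.normSq (x i) = 1},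
        traceNorm (Φ (vecMulVec x.1 (star x.1)) - (d : ℂ)⁻¹ • 1)) ≤
      diamondNorm d (Φ - depolarizing d)) ∧
    (∀ ρ σ : Matrix (Fin d) (Fin d) ℂ,
      ρ.PosSemidef → ρ.trace = 1 → σ.PosSemidef → σ.trace = 1 →
      traceNorm (Φ ρ - Φ σ) ≤ diamondNorm d (Φ - depolarizing d) * traceNorm (ρ - σ)) := by
  have hsup := iSup_traceNorm_map_vecMulVec_sub_le_diamondNorm Φ
  have hlip := fun (ρ σ : Matrix (Fin d) (Fin d) ℂ) (hρ : ρ.PosSemidef) (hρ1 : ρ.trace = 1)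
      (hσ : σ.PosSemidef) (hσ1 : σ.trace = 1) =>
    traceNorm_map_sub_map_le Φ ((d : ℂ)⁻¹ • 1) hρ.1 hσ.1 (hρ1.trans hσ1.symm)
  refine ⟨hlip, hsup, fun ρ σ hρ hρ1 hσ hσ1 => (hlip ρ σ hρ hρ1 hσ hσ1).trans ?_⟩
  rw [mul_comm _ (traceNorm _)]
  exact mul_le_mul_of_nonneg_left hsup (traceNorm_nonneg _)

/-- For a linear map `Φ` on `M_d(ℂ)`: (i) its trace-norm Lipschitz constant on density
matrices is bounded by `sup_{‖x‖=1} ‖Φ(|x⟩⟨x|) − 𝟙/d‖₁`, (ii) the latter is bounded by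
`‖Φ − Φ_*‖_◇`, and consequently (iii) the Lipschitz constant is at most `‖Φ − Φ_*‖_◇`. -/
theorem lipschitz_constant_le_diamond_norm (d : ℕ) (hd : 0 < d)
    (Φ : Matrix (Fin d) (Fin d) ℂ →ₗ[ℂ] Matrix (Fin d) (Fin d) ℂ) :
    (∀ ρ σ : Matrix (Fin d) (Fin d) ℂ,
      ρ.PosSemidef → ρ.trace = 1 → σ.PosSemidef → σ.trace = 1 →
      traceNorm (Φ ρ - Φ σ) ≤ traceNorm (ρ - σ) *
        ⨆ x : {x : Fin d → ℂ // ∑ i, Complex.normSq (x i) = 1},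
          traceNorm (Φ (vecMulVec x.1 (star x.1)) - (d : ℂ)⁻¹ • 1)) ∧
    ((⨆ x : {x : Fin d → ℂ // ∑ i, Complex.normSq (x i) = 1},
        traceNorm (Φ (vecMulVec x.1 (star x.1)) - (d : ℂ)⁻¹ • 1)) ≤
      diamondNorm d (Φ - depolarizing d)) ∧
    (∀ ρ σ : Matrix (Fin d) (Fin d) ℂ,
      ρ.PosSemidef → ρ.trace = 1 → σ.PosSemidef → σ.trace = 1 →
      traceNorm (Φ ρ - Φ σ) ≤ diamondNorm d (Φ - depolarizing d) * traceNorm (ρ - σ)) :=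
  lipschitz_constant_le_diamond_norm_general d Φ
end
end
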